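/- Frequency-uniform bound for the Schrödinger group: for every k ∈ ℤ^n, t ∈ ℝ, and u_0 ∈ 𝒮(ℝ^n), ‖□_k S(t) u_0‖_{L^∞(ℝ^n)} ≲ ‖□_k u_0‖_{L^1(ℝ^n)}, with implicit constant independent of k and t. Consequently ‖S(t)u_0‖_{M_{∞,1}} ≲ ‖u_0‖_{M_{1,1}} uniformly in t. -/

import Mathlib

/-!
Put `g = σ₀(· - k) 𝔉u₀`, so that `□_k u₀ = 𝔉⁻¹ g` and `□_k S(t) u₀ = 𝔉⁻¹ (e^{it|ξ|²_±} g)`.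
The multiplier is unimodular, so `‖□_k S(t) u₀‖_∞ ≤ ‖g‖_{L¹}`. Fourier inversion gives
`g = (2π)^{-n} 𝔉(□_k u₀)`, hence `‖g‖_∞ ≤ (2π)^{-n} ‖□_k u₀‖_{L¹}`; as `g` vanishes outside the
cube `k + [-√n, √n]^n` of volume `(2√n)^n`, this yields `‖g‖_{L¹} ≤ (√n/π)^n ‖□_k u₀‖_{L¹}`.
Summing over `k` gives the bound between modulation spaces.
-/

open MeasureTheory
open scoped ENNReal

/-- Fourier transform on `ℝ^n` (convention `e^{-i x·ξ}`). -/
noncomputable def FT (n : ℕ) (f : (Fin n → ℝ) → ℂ) (ξ : Fin n → ℝ) : ℂ :=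
  ∫ x : Fin n → ℝ, Complex.exp (-Complex.I * ((∑ i, x i * ξ i : ℝ) : ℂ)) * f x

/-- Inverse Fourier transform on `ℝ^n` (convention `e^{i x·ξ}`). -/
noncomputable def IFT (n : ℕ) (f : (Fin n → ℝ) → ℂ) (x : Fin n → ℝ) : ℂ :=
  ∫ ξ : Fin n → ℝ, Complex.exp (Complex.I * ((∑ i, x i * ξ i : ℝ) : ℂ)) * f ξ

/-- `□_k f = 𝔉⁻¹ (σ_0(·−k) 𝔉 f)`, the frequency-uniform decomposition operator. -/
noncomputable def boxOp (n : ℕ) (σ0 : (Fin n → ℝ) → ℂ) (k : Fin n → ℤ)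
    (f : (Fin n → ℝ) → ℂ) : (Fin n → ℝ) → ℂ :=
  IFT n fun ξ => σ0 (ξ - fun i => (k i : ℝ)) * FT n f ξ

/-- `□_k S(t) f = 𝔉⁻¹ (σ_0(·−k) e^{it|ξ|²_±} 𝔉 f)`. -/
noncomputable def boxSchr (n : ℕ) (σ0 : (Fin n → ℝ) → ℂ) (ε : Fin n → ℝ)
    (k : Fin n → ℤ) (t : ℝ) (f : (Fin n → ℝ) → ℂ) : (Fin n → ℝ) → ℂ :=
  IFT n fun ξ => σ0 (ξ - fun i => (k i : ℝ)) *
    Complex.exp (Complex.I * (t : ℂ) * ((∑ i, ε i * ξ i ^ 2 : ℝ) : ℂ)) * FT n f ξ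

open Complex
open scoped FourierTransform RealInnerProductSpace

namespace FrequencyUniform

variable {n : ℕ}

lemma FT_eq_IFT_neg (f : (Fin n → ℝ) → ℂ) (ξ : Fin n → ℝ) : FT n f ξ = IFT n f (-ξ) := by
  simp only [FT, IFT, Pi.neg_apply, neg_mul, Finset.sum_neg_distrib, ofReal_neg, mul_neg,
    mul_comm (ξ _)]

lemma norm_IFT_le (g : (Fin n → ℝ) → ℂ) (x : Fin n → ℝ) : ‖IFT n g x‖ ≤ ∫ ξ, ‖g ξ‖ :=
  (norm_integral_le_integral_norm _).trans_eq <| by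
    simp only [norm_mul, norm_exp_I_mul_ofReal, one_mul]

lemma continuous_IFT {g : (Fin n → ℝ) → ℂ} (hg : Integrable g) : Continuous (IFT n g) :=
  continuous_of_dominated
    (fun _ => (Continuous.aestronglyMeasurable (by fun_prop)).mul hg.aestronglyMeasurable)
    (fun _ => ae_of_all _ fun _ => by rw [norm_mul, norm_exp_I_mul_ofReal, one_mul])
    hg.norm (ae_of_all _ fun _ => by fun_prop)

lemma norm_FT_le (f : (Fin n → ℝ) → ℂ) (ξ : Fin n → ℝ) : ‖FT n f ξ‖ ≤ ∫ x, ‖f x‖ := by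
  rw [FT_eq_IFT_neg]
  exact norm_IFT_le f (-ξ)

lemma continuous_FT {f : (Fin n → ℝ) → ℂ} (hf : Integrable f) : Continuous (FT n f) := by
  rw [funext (FT_eq_IFT_neg f)]
  exact (continuous_IFT hf).comp continuous_neg

lemma inner_toLp_eq_sum (x : EuclideanSpace ℝ (Fin n)) (y : Fin n → ℝ) :
    ⟪x, WithLp.toLp 2 y⟫ = ∑ i, x i * y i := by
  simp [PiLp.inner_apply, mul_comm]

lemma integral_comp_ofLp (F : (Fin n → ℝ) → ℂ) :
    ∫ x : EuclideanSpace ℝ (Fin n), F x.ofLp = ∫ x, F x :=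
  (PiLp.volume_preserving_ofLp _).integral_comp
    (MeasurableEquiv.toLp 2 _).symm.measurableEmbedding F

lemma integrable_comp_ofLp_iff {F : (Fin n → ℝ) → ℂ} :
    Integrable (fun x : EuclideanSpace ℝ (Fin n) => F x.ofLp) ↔ Integrable F :=
  (PiLp.volume_preserving_ofLp _).integrable_comp_emb
    (MeasurableEquiv.toLp 2 _).symm.measurableEmbedding

lemma FT_eq_fourier (f : (Fin n → ℝ) → ℂ) (ξ : Fin n → ℝ) :
    FT n f ξ =
      𝓕 (fun x : EuclideanSpace ℝ (Fin n) => f x.ofLp) (WithLp.toLp 2 ((2 * Real.pi)⁻¹ • ξ)) := by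
  rw [Real.fourier_eq', FT, ← integral_comp_ofLp]
  congr 1
  ext x
  rw [WithLp.toLp_smul, real_inner_smul_right, inner_toLp_eq_sum, smul_eq_mul]
  have h2π : (2 * Real.pi) ≠ 0 := by positivity
  congr 2
  push_cast
  field_simp

lemma IFT_eq_fourierInv (g : (Fin n → ℝ) → ℂ) (x : Fin n → ℝ) :
    IFT n g x = (2 * Real.pi) ^ n *
      𝓕⁻ (fun η : EuclideanSpace ℝ (Fin n) => g ((2 * Real.pi) • η.ofLp)) (WithLp.toLp 2 x) := by
  have hscale := Measure.integral_comp_smul (volume : Measure (Fin n → ℝ))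
    (fun ξ => exp (I * ((∑ i, x i * ξ i : ℝ) : ℂ)) * g ξ) (2 * Real.pi)
  rw [Module.finrank_fin_fun, abs_of_pos (by positivity), eq_inv_smul_iff₀ (by positivity)]
    at hscale
  rw [IFT, ← hscale, Real.fourierInv_eq', ← integral_comp_ofLp, Complex.real_smul]
  push_cast
  congr 1
  refine integral_congr_ae (ae_of_all _ fun η => ?_)
  dsimp only
  rw [inner_toLp_eq_sum]
  congr 2
  push_cast
  simp only [Finset.mul_sum, Finset.sum_mul]
  refine Finset.sum_congr rfl fun i _ => ?_
  simp only [Pi.smul_apply, smul_eq_mul]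
  push_cast
  ring

theorem FT_IFT_eq {g : (Fin n → ℝ) → ℂ} (hgc : Continuous g) (hgi : Integrable g)
    (hIg : Integrable (IFT n g)) (ξ : Fin n → ℝ) :
    FT n (IFT n g) ξ = (2 * Real.pi) ^ n * g ξ := by
  have h2π : (2 * Real.pi) ≠ 0 := by positivity
  set G : EuclideanSpace ℝ (Fin n) → ℂ := fun η => g ((2 * Real.pi) • η.ofLp)
  have hIFT : (fun x : EuclideanSpace ℝ (Fin n) => IFT n g x.ofLp) =
      ((2 * Real.pi : ℂ) ^ n) • 𝓕⁻ G := funext fun x => IFT_eq_fourierInv g x.ofLp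
  have hG_int : Integrable G := integrable_comp_ofLp_iff.2 (hgi.comp_smul h2π)
  have hFinvG_int : Integrable (𝓕⁻ G) := by
    have := integrable_comp_ofLp_iff.2 hIg
    rwa [hIFT, integrable_smul_iff (by exact_mod_cast pow_ne_zero n h2π)] at this
  have hFG_int : Integrable (𝓕 G) := by
    simpa [Real.fourierInv_eq_fourier_neg] using hFinvG_int.comp_neg
  rw [FT_eq_fourier, hIFT, show 𝓕 (((2 * Real.pi : ℂ) ^ n) • 𝓕⁻ G) =
      ((2 * Real.pi : ℂ) ^ n) • 𝓕 (𝓕⁻ G) from VectorFourier.fourierIntegral_const_smul _ _ _ _ _,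
    Pi.smul_apply, smul_eq_mul, hG_int.fourier_fourierInv_eq hFG_int (by fun_prop)]
  simp only [G, smul_inv_smul₀ h2π]

lemma norm_le_integral_norm_IFT {g : (Fin n → ℝ) → ℂ} (hgc : Continuous g) (hgi : Integrable g)
    (hIg : Integrable (IFT n g)) (ξ : Fin n → ℝ) :
    ‖g ξ‖ ≤ ((2 * Real.pi) ^ n)⁻¹ * ∫ x, ‖IFT n g x‖ := by
  rw [le_inv_mul_iff₀ (by positivity)]
  calc (2 * Real.pi) ^ n * ‖g ξ‖ = ‖FT n (IFT n g) ξ‖ := by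
        rw [FT_IFT_eq hgc hgi hIg, norm_mul, norm_pow, norm_mul, Complex.norm_two,
          Complex.norm_real, Real.norm_of_nonneg Real.pi_pos.le]
    _ ≤ ∫ x, ‖IFT n g x‖ := norm_FT_le _ ξ

lemma integral_norm_le_of_eq_zero_outside_closedBall {g : (Fin n → ℝ) → ℂ} (hgc : Continuous g)
    (hIg : Integrable (IFT n g)) {c : Fin n → ℝ} {r : ℝ} (hr : 0 ≤ r)
    (hsupp : ∀ ξ ∉ Metric.closedBall c r, g ξ = 0) :
    ∫ ξ, ‖g ξ‖ ≤ (r / Real.pi) ^ n * ∫ x, ‖IFT n g x‖ := by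
  have hgi : Integrable g :=
    hgc.integrable_of_hasCompactSupport (HasCompactSupport.intro (isCompact_closedBall c r) hsupp)
  have hvol : volume.real (Metric.closedBall c r) = (2 * r) ^ n := by
    rw [measureReal_def, Real.volume_pi_closedBall c hr, Fintype.card_fin,
      ENNReal.toReal_ofReal (by positivity)]
  calc ∫ ξ, ‖g ξ‖ = ∫ ξ in Metric.closedBall c r, ‖g ξ‖ :=
        (setIntegral_eq_integral_of_forall_compl_eq_zero fun ξ hξ => by simp [hsupp ξ hξ]).symm
    _ ≤ ((2 * Real.pi) ^ n)⁻¹ * (∫ x, ‖IFT n g x‖) * volume.real (Metric.closedBall c r) :=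
        (Real.le_norm_self _).trans <|
          norm_setIntegral_le_of_norm_le_const measure_closedBall_lt_top fun ξ _ =>
            (norm_norm (g ξ)).trans_le (norm_le_integral_norm_IFT hgc hgi hIg ξ)
    _ = (r / Real.pi) ^ n * ∫ x, ‖IFT n g x‖ := by
        rw [hvol, div_pow, mul_pow, mul_pow]
        field_simp

lemma norm_boxSchr_le (σ0 : (Fin n → ℝ) → ℂ) (ε : Fin n → ℝ) (k : Fin n → ℤ) (t : ℝ)
    (u : (Fin n → ℝ) → ℂ) (x : Fin n → ℝ) :
    ‖boxSchr n σ0 ε k t u x‖ ≤ ∫ ξ, ‖σ0 (ξ - fun i => (k i : ℝ)) * FT n u ξ‖ :=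
  (norm_IFT_le _ x).trans_eq <| by
    simp only [norm_mul, mul_assoc I, ← ofReal_mul, norm_exp_I_mul_ofReal, mul_one]

lemma iSup_nnnorm_boxSchr_le {σ0 : (Fin n → ℝ) → ℂ} (hσc : Continuous σ0)
    (hσsupp : ∀ ξ : Fin n → ℝ, σ0 ξ ≠ 0 → ‖ξ‖ < Real.sqrt n) (ε : Fin n → ℝ)
    {u : (Fin n → ℝ) → ℂ} (hu : Integrable u) (t : ℝ) (k : Fin n → ℤ) :
    ⨆ x, (‖boxSchr n σ0 ε k t u x‖₊ : ℝ≥0∞)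
      ≤ ENNReal.ofReal ((Real.sqrt n / Real.pi) ^ n) * ∫⁻ x, ‖boxOp n σ0 k u x‖₊ := by
  set c : Fin n → ℝ := fun i => (k i : ℝ)
  set g : (Fin n → ℝ) → ℂ := fun ξ => σ0 (ξ - c) * FT n u ξ
  have hgc : Continuous g := (hσc.comp (continuous_sub_right c)).mul (continuous_FT hu)
  have hsupp : ∀ ξ ∉ Metric.closedBall c (Real.sqrt n), g ξ = 0 := fun ξ hξ => by
    refine mul_eq_zero_of_left (not_not.1 fun hσ => hξ ?_) _
    exact (hσsupp _ hσ).le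
  have hgi : Integrable g := hgc.integrable_of_hasCompactSupport
    (HasCompactSupport.intro (isCompact_closedBall _ _) hsupp)
  have hbox : boxOp n σ0 k u = IFT n g := rfl
  simp only [← enorm_eq_nnnorm, hbox]
  by_cases hint : Integrable (IFT n g)
  · refine iSup_le fun x => ?_
    rw [← ofReal_integral_norm_eq_lintegral_enorm hint, ← ENNReal.ofReal_mul (by positivity),
      ← ofReal_norm]
    exact ENNReal.ofReal_le_ofReal <| (norm_boxSchr_le σ0 ε k t u x).trans
      (integral_norm_le_of_eq_zero_outside_closedBall hgc hint (Real.sqrt_nonneg _) hsupp)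
  · have hC : 0 < (Real.sqrt n / Real.pi) ^ n := by
      rcases n with _ | n
      · simp
      · positivity
    have hinfinite : ∫⁻ x, ‖IFT n g x‖ₑ = ⊤ := by
      by_contra hfin
      exact hint ⟨(continuous_IFT hgi).aestronglyMeasurable, Ne.lt_top hfin⟩
    rw [hinfinite, ENNReal.mul_top (by simpa using hC)]
    exact le_top

end FrequencyUniform

theorem stmt_10_general (n : ℕ) (ε : Fin n → ℝ)
    (σ0 : (Fin n → ℝ) → ℂ) (hσc : Continuous σ0)
    (hσsupp : ∀ ξ : Fin n → ℝ, σ0 ξ ≠ 0 → ‖ξ‖ < Real.sqrt n) :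
    ∃ C : ℝ≥0∞, C ≠ ⊤ ∧
      ∀ (u0 : SchwartzMap (Fin n → ℝ) ℂ) (t : ℝ),
        (∀ k : Fin n → ℤ,
          (⨆ x : Fin n → ℝ, (‖boxSchr n σ0 ε k t (fun y => u0 y) x‖₊ : ℝ≥0∞))
            ≤ C * ∫⁻ x : Fin n → ℝ, (‖boxOp n σ0 k (fun y => u0 y) x‖₊ : ℝ≥0∞)) ∧
        (∑' k : Fin n → ℤ,
            ⨆ x : Fin n → ℝ, (‖boxSchr n σ0 ε k t (fun y => u0 y) x‖₊ : ℝ≥0∞))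
          ≤ C * ∑' k : Fin n → ℤ,
              ∫⁻ x : Fin n → ℝ, (‖boxOp n σ0 k (fun y => u0 y) x‖₊ : ℝ≥0∞) := by
  refine ⟨ENNReal.ofReal ((Real.sqrt n / Real.pi) ^ n), ENNReal.ofReal_ne_top, fun u0 t => ?_⟩
  have hk := FrequencyUniform.iSup_nnnorm_boxSchr_le hσc hσsupp ε u0.integrable t
  exact ⟨hk, (ENNReal.tsum_le_tsum hk).trans_eq ENNReal.tsum_mul_left⟩

/-- Frequency-uniform bound for the Schrödinger group: for all `k ∈ ℤ^n`, `t ∈ ℝ`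
and `u₀ ∈ 𝒮(ℝ^n)`, `‖□_k S(t)u₀‖_{L^∞} ≤ C ‖□_k u₀‖_{L¹}` with `C` independent of
`k` and `t`; consequently `‖S(t)u₀‖_{M_{∞,1}} ≤ C‖u₀‖_{M_{1,1}}` uniformly in `t`. -/
theorem stmt_10 (n : ℕ) (hn : 0 < n) (ε : Fin n → ℝ) (hε : ∀ i, ε i = 1 ∨ ε i = -1)
    (σ0 : (Fin n → ℝ) → ℂ) (hσc : Continuous σ0) (hσi : Integrable σ0 volume)
    (hσsupp : ∀ ξ : Fin n → ℝ, σ0 ξ ≠ 0 → ‖ξ‖ < Real.sqrt n)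
    (hσpart : ∀ ξ : Fin n → ℝ, ∑' k : Fin n → ℤ, σ0 (ξ - fun i => (k i : ℝ)) = 1) :
    ∃ C : ℝ≥0∞, C ≠ ⊤ ∧
      ∀ (u0 : SchwartzMap (Fin n → ℝ) ℂ) (t : ℝ),
        (∀ k : Fin n → ℤ,
          (⨆ x : Fin n → ℝ, (‖boxSchr n σ0 ε k t (fun y => u0 y) x‖₊ : ℝ≥0∞))
            ≤ C * ∫⁻ x : Fin n → ℝ, (‖boxOp n σ0 k (fun y => u0 y) x‖₊ : ℝ≥0∞)) ∧
        (∑' k : Fin n → ℤ,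
            ⨆ x : Fin n → ℝ, (‖boxSchr n σ0 ε k t (fun y => u0 y) x‖₊ : ℝ≥0∞))
          ≤ C * ∑' k : Fin n → ℤ,
              ∫⁻ x : Fin n → ℝ, (‖boxOp n σ0 k (fun y => u0 y) x‖₊ : ℝ≥0∞) :=
  stmt_10_general n ε σ0 hσc hσsupp
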